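/- Let G be a group and n a positive integer. The invertible elements of the monoid Matₙ(G⁰) of generalized rook matrices are exactly the matrices of the form (δ_{i,σ(j)} g_i)_{i,j} for σ ∈ Sym(Fin n) and (g₁,…,gₙ) ∈ Gⁿ, i.e., the monomial matrices with exactly one nonzero entry in each row and column. -/

import Mathlib

/-- A generalized rook matrix of order `n` over the group with zero `G⁰`:
an `n × n` matrix over `G ∪ {0}` with at most one nonzero entry in each row
and each column.  We record, for each column `j`, the (optional) pair
`(entry, row)` of its unique nonzero entry; the field `inj` states that
distinct columns use distinct rows. -/
structure Rook (n : ℕ) (G : Type*) [Group G] : Type _ where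
  col : Fin n → Option (G × Fin n)
  inj : ∀ ⦃j k : Fin n⦄ ⦃p q : G × Fin n⦄,
      col j = some p → col k = some q → p.2 = q.2 → j = k

namespace Rook

variable {n : ℕ} {G : Type*} [Group G]

theorem ext' {x y : Rook n G} (h : x.col = y.col) : x = y := by
  cases x; cases y; cases h; rfl

/-- Matrix multiplication of generalized rook matrices. -/
instance : Mul (Rook n G) where
  mul x y :=
  { col := fun j => (y.col j).bind fun p => (x.col p.2).map fun q => (q.1 * p.1, q.2)
    inj := by
      intro j k p q hp hq hpq
      simp only [Option.bind_eq_some_iff, Option.map_eq_some_iff] at hp hq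
      obtain ⟨pj, hyj, qj, hxj, rfl⟩ := hp
      obtain ⟨pk, hyk, qk, hxk, rfl⟩ := hq
      exact y.inj hyj hyk (x.inj hxj hxk hpq) }

theorem mul_col (x y : Rook n G) (j : Fin n) :
    (x * y).col j = (y.col j).bind fun p => (x.col p.2).map fun q => (q.1 * p.1, q.2) :=
  rfl

/-- The identity matrix. -/
instance : One (Rook n G) where
  one :=
  { col := fun j => some (1, j)
    inj := by
      intro j k p q hp hq hpq
      simp only [Option.some.injEq] at hp hq
      subst hp; subst hq; exact hpq }

theorem one_col (j : Fin n) : (1 : Rook n G).col j = some (1, j) := rfl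

/-- The zero matrix. -/
instance : Zero (Rook n G) where
  zero :=
  { col := fun _ => none
    inj := fun _ _ _ _ hp _ _ => by cases hp }

instance : Monoid (Rook n G) where
  mul_assoc x y z := by
    refine ext' (funext fun j => ?_)
    simp only [mul_col]
    rcases hz : z.col j with _ | p
    · simp
    rcases hy : y.col p.2 with _ | p'
    · simp [hy]
    rcases hx : x.col p'.2 with _ | p''
    · simp [hy, hx]
    simp [hy, hx, mul_assoc]
  one_mul x := by
    refine ext' (funext fun j => ?_)
    simp only [mul_col]
    rcases hx : x.col j with _ | p <;> simp [one_col]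
  mul_one x := by
    refine ext' (funext fun j => ?_)
    simp only [mul_col, one_col]
    rcases hx : x.col j with _ | p <;> simp [hx]

open scoped Classical in
/-- The inverse of a generalized rook matrix (conjugate transpose pattern). -/
noncomputable instance : Inv (Rook n G) where
  inv x :=
  { col := fun i =>
      if h : ∃ jp : Fin n × (G × Fin n), x.col jp.1 = some jp.2 ∧ jp.2.2 = i
      then some ((h.choose.2.1)⁻¹, h.choose.1)
      else none
    inj := by
      intro i i' p q hp hq hpq
      split_ifs at hp hq with h h'
      obtain ⟨hcol, hrow⟩ := h.choose_spec
      obtain ⟨hcol', hrow'⟩ := h'.choose_spec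
      injection hp with hp'
      injection hq with hq'
      subst hp'; subst hq'
      have hj : h.choose.1 = h'.choose.1 := hpq
      rw [← hj, hcol] at hcol'
      have hpq2 : h.choose.2 = h'.choose.2 := Option.some.inj hcol'
      rw [← hrow, ← hrow', hpq2] }

end Rook

/-!
A rook matrix is a unit exactly when each of its columns is nonzero. One direction: the
`j`-th column of `y * x` vanishes whenever that of `x` does, so `y * x = 1` forces every column
of `x` to be nonzero; the rows of these columns are then pairwise distinct, hence form a
permutation of `Fin n`, and the matrix is monomial. Conversely, monomial matrices multiply like
the wreath product `G ≀ Sym(n)`, so each has a monomial inverse.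
-/

namespace Rook

variable {n : ℕ} {G : Type*} [Group G]

def monomial (σ : Equiv.Perm (Fin n)) (g : Fin n → G) : Rook n G where
  col j := some (g (σ j), σ j)
  inj _ _ _ _ hp hq hpq := by
    cases hp
    cases hq
    exact σ.injective hpq

theorem monomial_mul (σ τ : Equiv.Perm (Fin n)) (g h : Fin n → G) :
    monomial σ g * monomial τ h = monomial (σ * τ) fun i => g i * h (σ.symm i) :=
  ext' <| funext fun j => by simp [mul_col, monomial]

theorem monomial_one : (monomial 1 1 : Rook n G) = 1 :=
  rfl

theorem isUnit_monomial (σ : Equiv.Perm (Fin n)) (g : Fin n → G) : IsUnit (monomial σ g) := by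
  refine ⟨⟨monomial σ g, monomial σ.symm fun i => (g (σ i))⁻¹, ?_, ?_⟩, rfl⟩
  all_goals
    rw [monomial_mul, ← monomial_one]
    congr 1 <;> ext <;> simp

theorem col_isSome_of_mul_eq_one {x y : Rook n G} (h : y * x = 1) (j : Fin n) :
    (x.col j).isSome := by
  have hj : (y * x).col j = some (1, j) := by rw [h, one_col]
  rw [mul_col] at hj
  cases hx : x.col j
  · simp [hx] at hj
  · rfl

theorem exists_perm_of_col_isSome {x : Rook n G} (hx : ∀ j, (x.col j).isSome) :
    ∃ (σ : Equiv.Perm (Fin n)) (g : Fin n → G), ∀ j, x.col j = some (g (σ j), σ j) := by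
  choose p hp using fun j => Option.isSome_iff_exists.mp (hx j)
  have hrow : Function.Injective fun j => (p j).2 := fun j k hjk => x.inj (hp j) (hp k) hjk
  let σ := Equiv.ofBijective _ (Finite.injective_iff_bijective.mp hrow)
  refine ⟨σ, fun i => (p (σ.symm i)).1, fun j => ?_⟩
  simp only [hp j, Equiv.symm_apply_apply]
  rfl

end Rook

theorem stmt14_general (n : ℕ) (G : Type*) [Group G] (x : Rook n G) :
    IsUnit x ↔
      ∃ (σ : Equiv.Perm (Fin n)) (g : Fin n → G),
        ∀ j : Fin n, x.col j = some (g (σ j), σ j) := by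
  constructor
  · rintro ⟨u, rfl⟩
    exact Rook.exists_perm_of_col_isSome (Rook.col_isSome_of_mul_eq_one u.inv_mul)
  · rintro ⟨σ, g, hx⟩
    obtain rfl : x = Rook.monomial σ g := Rook.ext' (funext hx)
    exact Rook.isUnit_monomial σ g

/-- The invertible elements of `Matₙ(G⁰)` are exactly the monomial matrices
`(δ_{i,σ(j)} g_i)_{i,j}`: column `j` has its unique nonzero entry `g (σ j)` in
row `σ j`. -/
theorem stmt14 (n : ℕ) (hn : 0 < n) (G : Type*) [Group G] (x : Rook n G) :
    IsUnit x ↔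
      ∃ (σ : Equiv.Perm (Fin n)) (g : Fin n → G),
        ∀ j : Fin n, x.col j = some (g (σ j), σ j) :=
  stmt14_general n G x
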